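/- arXiv:2010.08408 — 7 statements merged into one kernel-verified Lean document; each statement's English description precedes it below -/
import Mathlib

section
/- Let n ≥ 1 and let g be a 2n×2n complex matrix satisfying J·ḡ = g·J and gᵀ·g = 1_{2n}. Then det g = 1. -/
/-!
The antilinear map `σ v = J v̄` squares to `-1` and commutes with `g`. Hence `ḡ` is similar
to `g`, so the characteristic polynomial of `g` has real coefficients, and for real `r` the
generalized eigenspace of `g` at `r` is `σ`-stable. A space carrying an antilinear map with
square `-1` has even dimension: the matrix `C` of such a map satisfies `C C̄ = -1`, so
`|det C|² = (-1)^dim`. Thus every real root of the real characteristic polynomial has even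
multiplicity, the polynomial is nonnegative on `ℝ`, and `det g`, its value at `0` (the size
`2n` being even), is `≥ 0`. Orthogonality gives `det g = ±1`.
-/

open Matrix

/-- The 2n×2n block matrix `J = [[0, −1ₙ], [1ₙ, 0]]` over `ℂ`. -/
noncomputable def Jmat (n : ℕ) : Matrix (Fin n ⊕ Fin n) (Fin n ⊕ Fin n) ℂ :=
  Matrix.fromBlocks 0 (-1) 1 0

open Polynomial Filter Module ComplexConjugate
open scoped ComplexOrder

namespace Polynomial

theorem Monic.eval_pos_of_forall_not_isRoot {P : ℝ[X]} (hP : P.Monic) (h : ∀ r, ¬ P.IsRoot r)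
    (x : ℝ) : 0 < P.eval x := by
  by_contra! hx
  rcases Nat.eq_zero_or_pos P.natDegree with hdeg | hdeg
  · norm_num [hP.natDegree_eq_zero.mp hdeg] at hx
  have hlim : Tendsto (fun y => P.eval y) atTop atTop :=
    P.tendsto_atTop_of_leadingCoeff_nonneg (natDegree_pos_iff_degree_pos.mp hdeg)
      (by rw [hP.leadingCoeff]; exact zero_le_one)
  obtain ⟨b, hxb, hb⟩ := ((eventually_ge_atTop x).and (hlim.eventually_ge_atTop 0)).exists
  obtain ⟨c, -, hc⟩ := intermediate_value_Icc hxb P.continuous.continuousOn ⟨hx, hb⟩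
  exact h c hc

theorem Monic.eval_nonneg_of_even_rootMultiplicity {P : ℝ[X]} (hP : P.Monic)
    (h : ∀ r, Even (P.rootMultiplicity r)) (x : ℝ) : 0 ≤ P.eval x := by
  induction hd : P.natDegree using Nat.strong_induction_on generalizing P with
  | _ d ih =>
  by_cases hroot : ∃ r, P.IsRoot r
  swap
  · exact (hP.eval_pos_of_forall_not_isRoot (not_exists.mp hroot) x).le
  obtain ⟨r, hr⟩ := hroot
  have htwo : 2 ≤ P.rootMultiplicity r := by
    obtain ⟨k, hk⟩ := h r
    have := (rootMultiplicity_pos hP.ne_zero).mpr hr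
    omega
  obtain ⟨Q, hPQ⟩ := (le_rootMultiplicity_iff hP.ne_zero).mp htwo
  have hsq : ((X - C r) ^ 2).Monic := (monic_X_sub_C r).pow 2
  have hQ : Q.Monic := hsq.of_mul_monic_left (hPQ ▸ hP)
  have hQdeg : Q.natDegree < d := by
    rw [← hd, hPQ, hsq.natDegree_mul hQ, (monic_X_sub_C r).natDegree_pow, natDegree_X_sub_C]
    omega
  have hQeven : ∀ s, Even (Q.rootMultiplicity s) := by
    intro s
    have hs := h s
    rw [hPQ, rootMultiplicity_mul (hPQ ▸ hP.ne_zero), Nat.even_add] at hs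
    refine hs.mp ?_
    rw [pow_two, rootMultiplicity_mul (mul_ne_zero (X_sub_C_ne_zero r) (X_sub_C_ne_zero r))]
    exact ⟨_, rfl⟩
  rw [hPQ, eval_mul]
  exact mul_nonneg (by simp [sq_nonneg]) (ih _ hQdeg hQ hQeven rfl)

theorem exists_monic_map_algebraMap_eq_of_map_conj_eq {p : ℂ[X]} (hp : p.Monic)
    (hconj : p.map conj = p) : ∃ P : ℝ[X], P.Monic ∧ P.map (algebraMap ℝ ℂ) = p := by
  have hlifts : p ∈ lifts (algebraMap ℝ ℂ) := by
    refine (lifts_iff_coeff_lifts p).mpr fun k => ?_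
    obtain ⟨x, hx⟩ := Complex.conj_eq_iff_real.mp (by simpa using congrArg (coeff · k) hconj)
    exact ⟨x, hx.symm⟩
  obtain ⟨P, hP, -, hPm⟩ := lifts_and_natDegree_eq_and_monic hlifts hp
  exact ⟨P, hPm, hP⟩

end Polynomial

namespace Matrix

theorem star_mulVec_eq_map_conj {m n : Type*} [Fintype n] (M : Matrix m n ℂ) (v : n → ℂ) :
    star (M *ᵥ v) = M.map conj *ᵥ star v :=
  funext fun i => RingHom.map_mulVec (starRingEnd ℂ) M v i

theorem even_card_of_mul_map_conj_eq_neg_one {ι : Type*} [Fintype ι] [DecidableEq ι]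
    (C : Matrix ι ι ℂ) (hC : C * C.map conj = -1) : Even (Fintype.card ι) := by
  have hdet : C.det * conj C.det = (-1) ^ Fintype.card ι := by
    rw [RingHom.map_det, RingHom.mapMatrix_apply, ← det_mul, hC, det_neg, det_one, mul_one]
  refine Nat.even_or_odd _ |>.resolve_right fun hodd => ?_
  rw [hodd.neg_one_pow, Complex.mul_conj] at hdet
  have := congrArg Complex.re hdet
  simp only [Complex.ofReal_re, Complex.neg_re, Complex.one_re] at this
  linarith [Complex.normSq_nonneg C.det]

end Matrix

theorem Module.even_finrank_of_antilinear_sq_eq_neg {V : Type*} [AddCommGroup V] [Module ℂ V]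
    [FiniteDimensional ℂ V] (τ : V →ₗ⋆[ℂ] V) (hτ : ∀ v, τ (τ v) = -v) :
    Even (finrank ℂ V) := by
  let e := (finBasis ℂ V).equivFun
  let C : Matrix (Fin (finrank ℂ V)) (Fin (finrank ℂ V)) ℂ :=
    LinearMap.toMatrix'
      (e.toLinearMap ∘ₛₗ τ ∘ₛₗ e.symm.toLinearMap ∘ₛₗ (starLinearEquiv ℂ).toLinearMap)
  have hCe : ∀ v, e (τ v) = C *ᵥ star (e v) := by
    intro v
    simp [C, LinearMap.toMatrix'_mulVec]
  have hC : C * C.map conj = -1 := by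
    refine ext_of_mulVec_single fun i => ?_
    obtain ⟨v, hv⟩ := e.surjective (Pi.single i 1)
    rw [← hv, ← mulVec_mulVec, ← star_star (e v), ← star_mulVec_eq_map_conj, ← hCe, ← hCe, hτ,
      map_neg, neg_mulVec, one_mulVec, star_star]
  simpa using C.even_card_of_mul_map_conj_eq_neg_one hC

namespace Matrix

variable {ι : Type*} [Fintype ι] {A g : Matrix ι ι ℂ}

def conjMulVec (A : Matrix ι ι ℂ) : (ι → ℂ) →ₗ⋆[ℂ] (ι → ℂ) :=
  A.mulVecLin ∘ₛₗ (starLinearEquiv ℂ).toLinearMap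

theorem conjMulVec_apply (v : ι → ℂ) : A.conjMulVec v = A *ᵥ star v := rfl

theorem conjMulVec_mulVec (hg : A * g.map conj = g * A) (v : ι → ℂ) :
    A.conjMulVec (g *ᵥ v) = g *ᵥ A.conjMulVec v := by
  rw [conjMulVec_apply, conjMulVec_apply, star_mulVec_eq_map_conj, mulVec_mulVec, hg,
    mulVec_mulVec]

variable [DecidableEq ι]

theorem conjMulVec_conjMulVec (hA : A * A.map conj = -1) (v : ι → ℂ) :
    A.conjMulVec (A.conjMulVec v) = -v := by
  rw [conjMulVec_apply, conjMulVec_apply, star_mulVec_eq_map_conj, star_star, mulVec_mulVec, hA,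
    neg_mulVec, one_mulVec]

theorem conjMulVec_mem_maxGenEigenspace (hg : A * g.map conj = g * A) (r : ℝ)
    {v : ι → ℂ} (hv : v ∈ End.maxGenEigenspace (toLin' g) (r : ℂ)) :
    A.conjMulVec v ∈ End.maxGenEigenspace (toLin' g) (r : ℂ) := by
  have hcomm : Function.Commute A.conjMulVec
      ⇑(toLin' g - (r : ℂ) • 1 : End ℂ (ι → ℂ)) := fun w => by
    simp only [LinearMap.sub_apply, LinearMap.smul_apply, End.one_apply, map_sub,
      LinearMap.map_smulₛₗ, Complex.conj_ofReal, toLin'_apply, conjMulVec_mulVec hg]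
  obtain ⟨k, hk⟩ := (End.mem_maxGenEigenspace _ _ _).mp hv
  refine (End.mem_maxGenEigenspace _ _ _).mpr ⟨k, ?_⟩
  rw [End.coe_pow, ← (hcomm.iterate_right k).eq, ← End.coe_pow, hk, map_zero]

theorem even_rootMultiplicity_charpoly (hA : A * A.map conj = -1)
    (hg : A * g.map conj = g * A) (r : ℝ) : Even (g.charpoly.rootMultiplicity (r : ℂ)) := by
  let W := End.maxGenEigenspace (toLin' g) (r : ℂ)
  let τ : W →ₗ⋆[ℂ] W := (A.conjMulVec ∘ₛₗ W.subtype).codRestrict W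
    fun v => conjMulVec_mem_maxGenEigenspace hg r v.2
  rw [← charpoly_toLin', ← LinearMap.finrank_maxGenEigenspace_eq]
  exact Module.even_finrank_of_antilinear_sq_eq_neg τ
    fun v => Subtype.ext (conjMulVec_conjMulVec hA v)

theorem charpoly_map_conj (hA : A * A.map conj = -1)
    (hg : A * g.map conj = g * A) : g.charpoly.map conj = g.charpoly := by
  have hAinv : -A.map conj * A = 1 := mul_eq_one_comm.mp (by rw [mul_neg, hA, neg_neg])
  have hgbar : g.map conj = -A.map conj * (g * A) := by
    rw [← hg, ← mul_assoc, hAinv, one_mul]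
  rw [← charpoly_map, hgbar, charpoly_mul_comm, mul_assoc, mul_neg, hA, neg_neg, mul_one]

theorem det_nonneg_of_mul_map_conj_eq (hA : A * A.map conj = -1)
    (hg : A * g.map conj = g * A) : 0 ≤ g.det := by
  obtain ⟨P, hPm, hP⟩ :=
    exists_monic_map_algebraMap_eq_of_map_conj_eq g.charpoly_monic (charpoly_map_conj hA hg)
  have heven : ∀ r, Even (P.rootMultiplicity r) := fun r => by
    rw [eq_rootMultiplicity_map (algebraMap ℝ ℂ).injective, hP]
    exact even_rootMultiplicity_charpoly hA hg r
  have hdet : g.det = P.eval 0 := by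
    rw [det_eq_sign_charpoly_coeff, (A.even_card_of_mul_map_conj_eq_neg_one hA).neg_one_pow,
      one_mul, ← hP, coeff_map, coeff_zero_eq_eval_zero]
    rfl
  rw [hdet]
  exact Complex.zero_le_real.mpr (hPm.eval_nonneg_of_even_rootMultiplicity heven 0)

end Matrix

theorem stmt1_general (n : ℕ)
    (g : Matrix (Fin n ⊕ Fin n) (Fin n ⊕ Fin n) ℂ)
    (h1 : Jmat n * g.map (starRingEnd ℂ) = g * Jmat n)
    (h2 : gᵀ * g = 1) :
    g.det = 1 := by
  have hJ : Jmat n * (Jmat n).map conj = -1 := by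
    have hJreal : (Jmat n).map conj = Jmat n := by
      rw [Jmat, fromBlocks_map]
      simp [Matrix.map_neg]
    rw [hJreal]
    exact J_squared (Fin n) ℂ
  have hsq : g.det * g.det = 1 := by simpa using congrArg det h2
  rcases mul_self_eq_one_iff.mp hsq with h | h
  · exact h
  · have := det_nonneg_of_mul_map_conj_eq hJ h1
    rw [h] at this
    norm_num at this

/-- Every real point of the quaternionic orthogonal group `O^J_{2n}` has determinant 1:
if `J·ḡ = g·J` and `gᵀ·g = 1` then `det g = 1`. -/
theorem stmt1 (n : ℕ) (hn : 1 ≤ n)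
    (g : Matrix (Fin n ⊕ Fin n) (Fin n ⊕ Fin n) ℂ)
    (h1 : Jmat n * g.map (starRingEnd ℂ) = g * Jmat n)
    (h2 : gᵀ * g = 1) :
    g.det = 1 :=
  stmt1_general n g h1 h2
end

section
/- Let F be a field of characteristic zero, M an F-vector space, and Q a quadratic form on M. Let x be an invertible element of the Clifford algebra C(Q), let r ∈ F satisfy x·β(x) = r·1 (a scalar), and let v, w ∈ M satisfy x·ι(v)·β(x) = ι(w). Then Q(w) = r²·Q(v). -/
/-! Since `x` is a unit, `x·β(x) = r` forces `β(x)·x = r` as well, so squaring the twisted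
conjugate collapses the middle factor: `ι(w)² = x·ι(v)·(β(x)·x)·ι(v)·β(x) = r·x·ι(v)²·β(x)
= r·Q(v)·x·β(x) = r²·Q(v)`. Comparing scalars uses that `algebraMap F C(Q)` is injective, which
holds because `C(Q)` is nontrivial once `2` is invertible. -/

section

variable {R A : Type*} [CommSemiring R] [Semiring A] [Algebra R A]

theorem IsUnit.mul_eq_algebraMap_comm {x y : A} {r : R} (hx : IsUnit x)
    (h : x * y = algebraMap R A r) : y * x = algebraMap R A r :=
  hx.mul_left_cancel <| by rw [← mul_assoc, h, Algebra.commutes]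

theorem mul_mul_mul_mul_eq_smul_of_mul_eq_algebraMap {x y : A} {r : R}
    (h : y * x = algebraMap R A r) (a b : A) :
    x * a * y * (x * b * y) = r • (x * (a * b) * y) := by
  calc x * a * y * (x * b * y) = x * a * (y * x) * b * y := by simp only [mul_assoc]
    _ = r • (x * (a * b) * y) := by
      rw [h, ← Algebra.commutes, Algebra.smul_def]; simp only [mul_assoc, Algebra.commutes]

end

/-- If `x` is an invertible element of the Clifford algebra with `x·β(x) = r` a scalar, and
`x·ι(v)·β(x) = ι(w)`, then `Q(w) = r²·Q(v)` (the similitude factor of twisted conjugation is the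
square of the spinor norm). -/
theorem stmt7 (F M : Type*) [Field F] [CharZero F] [AddCommGroup M] [Module F M]
    (Q : QuadraticForm F M) (x : CliffordAlgebra Q) (hx : IsUnit x) (r : F)
    (v w : M)
    (hr : x * CliffordAlgebra.reverse x = algebraMap F (CliffordAlgebra Q) r)
    (hvw : x * CliffordAlgebra.ι Q v * CliffordAlgebra.reverse x = CliffordAlgebra.ι Q w) :
    Q w = r ^ 2 * Q v := by
  open CliffordAlgebra in
  have : Invertible (2 : F) := invertibleOfNonzero two_ne_zero
  have hrx : reverse x * x = algebraMap F (CliffordAlgebra Q) r := hx.mul_eq_algebraMap_comm hr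
  refine (algebraMap F (CliffordAlgebra Q)).injective ?_
  calc algebraMap F _ (Q w) = ι Q w * ι Q w := (ι_sq_scalar Q w).symm
    _ = r • (x * algebraMap F _ (Q v) * reverse x) := by
      rw [← hvw, mul_mul_mul_mul_eq_smul_of_mul_eq_algebraMap hrx, ι_sq_scalar]
    _ = algebraMap F _ (r ^ 2 * Q v) := by
      rw [← Algebra.commutes, mul_assoc, hr, Algebra.smul_def, ← map_mul, ← map_mul]; ring_nf
end

section
/- Let R be a commutative ring, M an R-module, Q a quadratic form on M, and V₁, V₂ ⊆ M submodules such that polar Q(v₁, v₂) = 0 for all v₁ ∈ V₁ and v₂ ∈ V₂. Let i, j ∈ ℤ/2, let a be an element of the Clifford algebra C(Q) lying both in the i-th graded piece of the ℤ/2-grading and in the R-subalgebra generated by ι(V₁), and let b lie both in the j-th graded piece and in the R-subalgebra generated by ι(V₂). Then a·b = −b·a if i = j = 1, and a·b = b·a otherwise (i.e. a·b = (−1)^{ij}·b·a). -/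
open CliffordAlgebra QuadraticMap

/-! A vector `ι v` with `v ⟂ T` anticommutes with every `ι w`, `w ∈ T`, so it passes through any
`x` in the subalgebra generated by `ι(T)` at the cost of the grade involution:
`x * ι v = ι v * involute x`. For homogeneous `b` the involution is the sign `(-1)^j`, and pushing
the vectors of a product `a` through `b` one at a time gives `a * b = (-1)^(ij) b * a`. -/

theorem mul_eq_mul_algHom_of_mem_adjoin {R A : Type*} [CommSemiring R] [Semiring A] [Algebra R A]
    (φ : A →ₐ[R] A) {s : Set A} {b : A} (h : ∀ x ∈ s, x * b = b * φ x) {a : A}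
    (ha : a ∈ Algebra.adjoin R s) : a * b = b * φ a := by
  induction ha using Algebra.adjoin_induction with
  | mem x hx => exact h x hx
  | algebraMap r => rw [AlgHom.commutes, Algebra.commutes]
  | add x y _ _ hx hy => rw [add_mul, hx, hy, map_add, mul_add]
  | mul x y _ _ hx hy => rw [mul_assoc, hy, ← mul_assoc, hx, mul_assoc, map_mul]

namespace CliffordAlgebra

variable {R M : Type*} [CommRing R] [AddCommGroup M] [Module R M] {Q : QuadraticForm R M}
  {S T : Set M}

theorem mul_ι_eq_ι_mul_involute_of_mem_adjoin {v : M} (hv : ∀ w ∈ T, polar Q v w = 0)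
    {x : CliffordAlgebra Q} (hx : x ∈ Algebra.adjoin R (ι Q '' T)) :
    x * ι Q v = ι Q v * involute x := by
  refine mul_eq_mul_algHom_of_mem_adjoin involute ?_ hx
  rintro _ ⟨w, hw, rfl⟩
  rw [involute_ι, mul_neg]
  refine eq_neg_of_add_eq_zero_left ?_
  rw [ι_mul_ι_add_swap, polar_comm, hv w hw, map_zero]

theorem commute_of_mem_adjoin_of_mem_even (horth : ∀ v ∈ S, ∀ w ∈ T, polar Q v w = 0)
    {a b : CliffordAlgebra Q} (ha : a ∈ Algebra.adjoin R (ι Q '' S))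
    (hb : b ∈ Algebra.adjoin R (ι Q '' T)) (hb₀ : b ∈ evenOdd Q 0) : Commute a b := by
  refine (Algebra.commute_of_mem_adjoin_of_forall_mem_commute ha ?_).symm
  rintro _ ⟨v, hv, rfl⟩
  have hbv := mul_ι_eq_ι_mul_involute_of_mem_adjoin (horth v hv) hb
  rwa [involute_eq_of_mem_even hb₀] at hbv

theorem mul_eq_mul_involute_of_mem_adjoin_of_mem_odd (horth : ∀ v ∈ S, ∀ w ∈ T, polar Q v w = 0)
    {a b : CliffordAlgebra Q} (ha : a ∈ Algebra.adjoin R (ι Q '' S))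
    (hb : b ∈ Algebra.adjoin R (ι Q '' T)) (hb₁ : b ∈ evenOdd Q 1) : a * b = b * involute a := by
  refine mul_eq_mul_algHom_of_mem_adjoin involute ?_ ha
  rintro _ ⟨v, hv, rfl⟩
  have hbv := mul_ι_eq_ι_mul_involute_of_mem_adjoin (horth v hv) hb
  rw [involute_eq_of_mem_odd hb₁, mul_neg] at hbv
  rw [involute_ι, mul_neg, hbv, neg_neg]

end CliffordAlgebra

/-- Super-commutation in a Clifford algebra for an orthogonal pair of submodules: if `a` lies in
the `i`-th graded piece and in the subalgebra generated by `ι(V₁)`, and `b` lies in the `j`-th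
graded piece and in the subalgebra generated by `ι(V₂)`, with `V₁ ⟂ V₂`, then
`a·b = (−1)^{ij}·b·a`. -/
theorem stmt9 (R M : Type*) [CommRing R] [AddCommGroup M] [Module R M]
    (Q : QuadraticForm R M) (V₁ V₂ : Submodule R M)
    (horth : ∀ v₁ ∈ V₁, ∀ v₂ ∈ V₂, QuadraticMap.polar (⇑Q) v₁ v₂ = 0)
    (i j : ZMod 2) (a b : CliffordAlgebra Q)
    (hai : a ∈ CliffordAlgebra.evenOdd Q i)
    (haV : a ∈ Algebra.adjoin R (⇑(CliffordAlgebra.ι Q) '' (V₁ : Set M)))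
    (hbj : b ∈ CliffordAlgebra.evenOdd Q j)
    (hbV : b ∈ Algebra.adjoin R (⇑(CliffordAlgebra.ι Q) '' (V₂ : Set M))) :
    if i = 1 ∧ j = 1 then a * b = -(b * a) else a * b = b * a := by
  have zmod_two : ∀ k : ZMod 2, k = 0 ∨ k = 1 := by decide
  obtain rfl | rfl := zmod_two j
  · simpa using (commute_of_mem_adjoin_of_mem_even horth haV hbV hbj).eq
  have hab := mul_eq_mul_involute_of_mem_adjoin_of_mem_odd horth haV hbV hbj
  obtain rfl | rfl := zmod_two i
  · simpa [involute_eq_of_mem_even hai] using hab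
  · simpa [involute_eq_of_mem_odd hai] using hab
end

section
/- Let R be a commutative ring, M an R-module, Q a quadratic form on M, and V₁, V₂ ⊆ M submodules such that polar Q(v₁, v₂) = 0 for all v₁ ∈ V₁ and v₂ ∈ V₂. Let i, j ∈ ℤ/2, let a be an element of the Clifford algebra C(Q) lying both in the i-th graded piece and in the R-subalgebra generated by ι(V₁), and let b lie both in the j-th graded piece and in the R-subalgebra generated by ι(V₂). Then β(a·b) = −β(a)·β(b) if i = j = 1, and β(a·b) = β(a)·β(b) otherwise, where β = reverse. -/
/-!
The inclusions `C(Q|Vₖ) → C(Q)` are graded and their ranges contain `a` and `b`, so `a` and `b`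
lift to homogeneous elements of the same parities. Images of orthogonal isometries
graded-commute, whence `b·a = (−1)^{ij}·a·b`; applying the anti-automorphism `reverse` and
using `((−1)^{ij})² = 1` gives the claim.
-/

namespace QuadraticMap.Isometry

variable {R M : Type*} [CommRing R] [AddCommGroup M] [Module R M]

def subtype (Q : QuadraticForm R M) (V : Submodule R M) : Q.comp V.subtype →qᵢ Q :=
  ⟨V.subtype, fun _ => rfl⟩

end QuadraticMap.Isometry

namespace CliffordAlgebra

section map

variable {R M₁ M₂ : Type*} [CommRing R] [AddCommGroup M₁] [AddCommGroup M₂]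
  [Module R M₁] [Module R M₂] {Q₁ : QuadraticForm R M₁} {Q₂ : QuadraticForm R M₂}

theorem evenOdd_map_map_le (f : Q₁ →qᵢ Q₂) (n : ZMod 2) :
    (evenOdd Q₁ n).map (map f).toLinearMap ≤ evenOdd Q₂ n := by
  simp_rw [evenOdd, Submodule.map_iSup, Submodule.map_pow, ι_range_map_map]
  exact iSup_mono fun _ => pow_le_pow_left' LinearMap.map_le_range _

theorem map_mem_evenOdd (f : Q₁ →qᵢ Q₂) {n : ZMod 2} {x : CliffordAlgebra Q₁}
    (hx : x ∈ evenOdd Q₁ n) : map f x ∈ evenOdd Q₂ n :=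
  evenOdd_map_map_le f n ⟨x, hx, rfl⟩

def gradedMap (f : Q₁ →qᵢ Q₂) : evenOdd Q₁ →+*ᵍ evenOdd Q₂ where
  toRingHom := (map f).toRingHom
  map_mem := map_mem_evenOdd f

theorem exists_mem_evenOdd_map_eq (f : Q₁ →qᵢ Q₂) {n : ZMod 2} {a : CliffordAlgebra Q₂}
    (ha : a ∈ evenOdd Q₂ n) (haf : a ∈ (map f).range) :
    ∃ x ∈ evenOdd Q₁ n, map f x = a := by
  obtain ⟨y, rfl⟩ := haf
  refine ⟨DirectSum.decompose (evenOdd Q₁) y n, Submodule.coe_mem _, ?_⟩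
  rw [← DirectSum.decompose_of_mem_same _ ha]
  exact (gradedMap f).map_directSumDecompose ..

end map

variable {R M : Type*} [CommRing R] [AddCommGroup M] [Module R M] {Q : QuadraticForm R M}

theorem adjoin_ι_image_le_range_map_subtype (V : Submodule R M) :
    Algebra.adjoin R (ι Q '' V) ≤ (map (QuadraticMap.Isometry.subtype Q V)).range := by
  rw [Algebra.adjoin_le_iff]
  rintro _ ⟨v, hv, rfl⟩
  exact ⟨ι _ ⟨v, hv⟩, map_apply_ι _ _⟩

theorem mul_eq_smul_mul_of_mem_adjoin_of_isOrtho {V₁ V₂ : Submodule R M}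
    (horth : ∀ v₁ ∈ V₁, ∀ v₂ ∈ V₂, Q.IsOrtho v₁ v₂) {i j : ZMod 2} {a b : CliffordAlgebra Q}
    (hai : a ∈ evenOdd Q i) (haV : a ∈ Algebra.adjoin R (ι Q '' V₁))
    (hbj : b ∈ evenOdd Q j) (hbV : b ∈ Algebra.adjoin R (ι Q '' V₂)) :
    b * a = (-1 : ℤˣ) ^ (i * j) • (a * b) := by
  obtain ⟨a', ha', rfl⟩ :=
    exists_mem_evenOdd_map_eq _ hai (adjoin_ι_image_le_range_map_subtype V₁ haV)
  obtain ⟨b', hb', rfl⟩ :=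
    exists_mem_evenOdd_map_eq _ hbj (adjoin_ι_image_le_range_map_subtype V₂ hbV)
  exact map_mul_map_of_isOrtho_of_mem_evenOdd _ _
    (fun y x => (horth x.1 x.2 y.1 y.2).symm) b' a' hb' ha'

theorem reverse_mul_of_mem_adjoin_of_isOrtho {V₁ V₂ : Submodule R M}
    (horth : ∀ v₁ ∈ V₁, ∀ v₂ ∈ V₂, Q.IsOrtho v₁ v₂) {i j : ZMod 2} {a b : CliffordAlgebra Q}
    (hai : a ∈ evenOdd Q i) (haV : a ∈ Algebra.adjoin R (ι Q '' V₁))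
    (hbj : b ∈ evenOdd Q j) (hbV : b ∈ Algebra.adjoin R (ι Q '' V₂)) :
    reverse (a * b) = (-1 : ℤˣ) ^ (i * j) • (reverse a * reverse b) := by
  have hcomm := mul_eq_smul_mul_of_mem_adjoin_of_isOrtho horth hai haV hbj hbV
  calc reverse (a * b) = (-1 : ℤˣ) ^ (i * j) • (-1 : ℤˣ) ^ (i * j) • reverse (a * b) := by
        rw [smul_smul, Int.units_mul_self, one_smul]
    _ = (-1 : ℤˣ) ^ (i * j) • (reverse a * reverse b) := by
        rw [← LinearMap.map_smul_of_tower, ← hcomm, reverse.map_mul]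

end CliffordAlgebra

/-- Behavior of the reversal `β = reverse` on products from an orthogonal pair of submodules:
if `a` lies in the `i`-th graded piece and in the subalgebra generated by `ι(V₁)`, and `b` lies
in the `j`-th graded piece and in the subalgebra generated by `ι(V₂)`, with `V₁ ⟂ V₂`, then
`β(a·b) = (−1)^{ij}·β(a)·β(b)`. -/
theorem stmt10 (R M : Type*) [CommRing R] [AddCommGroup M] [Module R M]
    (Q : QuadraticForm R M) (V₁ V₂ : Submodule R M)
    (horth : ∀ v₁ ∈ V₁, ∀ v₂ ∈ V₂, QuadraticMap.polar (⇑Q) v₁ v₂ = 0)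
    (i j : ZMod 2) (a b : CliffordAlgebra Q)
    (hai : a ∈ CliffordAlgebra.evenOdd Q i)
    (haV : a ∈ Algebra.adjoin R (⇑(CliffordAlgebra.ι Q) '' (V₁ : Set M)))
    (hbj : b ∈ CliffordAlgebra.evenOdd Q j)
    (hbV : b ∈ Algebra.adjoin R (⇑(CliffordAlgebra.ι Q) '' (V₂ : Set M))) :
    if i = 1 ∧ j = 1 then
      CliffordAlgebra.reverse (a * b)
        = -(CliffordAlgebra.reverse a * CliffordAlgebra.reverse b)
    else
      CliffordAlgebra.reverse (a * b)
        = CliffordAlgebra.reverse a * CliffordAlgebra.reverse b := by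
  have hrev := CliffordAlgebra.reverse_mul_of_mem_adjoin_of_isOrtho
    (fun v₁ h₁ v₂ h₂ => QuadraticMap.isOrtho_polarBilin.mp (horth v₁ h₁ v₂ h₂)) hai haV hbj hbV
  rw [hrev]
  split_ifs with h
  · rw [h.1, h.2, mul_one, uzpow_one, Units.neg_smul, one_smul]
  · have hij : i * j = 0 := (by decide : ∀ i j : ZMod 2, ¬(i = 1 ∧ j = 1) → i * j = 0) i j h
    rw [hij, uzpow_zero, one_smul]
end

section
/- Let R be a commutative ring, M an R-module, Q a quadratic form on M, and V₁, V₂ ⊆ M submodules with polar Q(v₁, v₂) = 0 for all v₁ ∈ V₁, v₂ ∈ V₂. Let g, h be invertible elements of the Clifford algebra C(Q) such that g lies in the even graded piece and in the R-subalgebra generated by ι(V₁), h lies in the even graded piece and in the R-subalgebra generated by ι(V₂), and such that for every v₁ ∈ V₁ the element g·ι(v₁)·g⁻¹ lies in ι(V₁) and for every v₂ ∈ V₂ the element h·ι(v₂)·h⁻¹ lies in ι(V₂). Then for all v₁ ∈ V₁ and v₂ ∈ V₂: (g·h)·ι(v₁ + v₂)·(g·h)⁻¹ = g·ι(v₁)·g⁻¹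 + h·ι(v₂)·h⁻¹, and in particular this element lies in ι(V₁ + V₂). -/
/-! A vector orthogonal to `V` anticommutes with every `ι v`, `v ∈ V`, so it commutes with every
even element of the subalgebra generated by `ι(V)`. Hence `h` fixes `ι v₁` and `g` fixes
`h ι(v₂) h⁻¹ ∈ ι(V₂)`, and conjugation by `g h` splits as the sum of the two conjugations. -/

open CliffordAlgebra

theorem Units.mul_mul_inv_eq_of_commute {A : Type*} [Monoid A] (u : Aˣ) {x : A}
    (hx : Commute (u : A) x) : u * x * ↑u⁻¹ = x := by
  rw [hx.eq, Units.mul_inv_cancel_right]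

theorem Units.mul_conj_add_eq {A : Type*} [Ring A] (g h : Aˣ) {x y : A}
    (hx : Commute (h : A) x) (hy : Commute (g : A) (h * y * ↑h⁻¹)) :
    ↑(g * h) * (x + y) * ↑(g * h)⁻¹ = g * x * ↑g⁻¹ + h * y * ↑h⁻¹ := by
  have conj_mul (z : A) : ↑(g * h) * z * ↑(g * h)⁻¹ = g * (h * z * ↑h⁻¹) * ↑g⁻¹ := by
    simp only [mul_inv_rev, Units.val_mul, mul_assoc]
  rw [mul_add, add_mul, conj_mul, conj_mul, h.mul_mul_inv_eq_of_commute hx,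
    g.mul_mul_inv_eq_of_commute hy]

namespace CliffordAlgebra

variable {R M : Type*} [CommRing R] [AddCommGroup M] [Module R M] {Q : QuadraticForm R M}
  {V : Submodule R M} {m : M} {x : CliffordAlgebra Q}

theorem ι_mul_eq_involute_mul_ι_of_mem_adjoin (horth : ∀ v ∈ V, QuadraticMap.polar Q m v = 0)
    (hx : x ∈ Algebra.adjoin R (ι Q '' V)) : ι Q m * x = involute x * ι Q m := by
  induction hx using Algebra.adjoin_induction with
  | mem y hy =>
    obtain ⟨v, hv, rfl⟩ := hy
    rw [involute_ι, ι_mul_ι_comm, horth v hv, map_zero, zero_sub, neg_mul]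
  | algebraMap r => simp [Algebra.commutes]
  | add a b _ _ ha hb => rw [mul_add, ha, hb, map_add, add_mul]
  | mul a b _ _ ha hb => rw [← mul_assoc, ha, mul_assoc, hb, map_mul, ← mul_assoc]

theorem commute_of_mem_even_of_mem_adjoin (horth : ∀ v ∈ V, QuadraticMap.polar Q m v = 0)
    (hx0 : x ∈ evenOdd Q 0) (hx : x ∈ Algebra.adjoin R (ι Q '' V)) : Commute x (ι Q m) :=
  (ι_mul_eq_involute_mul_ι_of_mem_adjoin horth hx).trans
    (congrArg (· * ι Q m) (involute_eq_of_mem_even hx0)) |>.symm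

end CliffordAlgebra

/-- For an orthogonal pair of submodules `V₁ ⟂ V₂`, if `g` (resp. `h`) is an invertible even
element of the Clifford algebra lying in the subalgebra generated by `ι(V₁)` (resp. `ι(V₂)`)
whose conjugation preserves `ι(V₁)` (resp. `ι(V₂)`), then conjugation by `g·h` acts on
`ι(V₁ + V₂)` as the block sum of the two conjugations. -/
theorem stmt11 (R M : Type*) [CommRing R] [AddCommGroup M] [Module R M]
    (Q : QuadraticForm R M) (V₁ V₂ : Submodule R M)
    (horth : ∀ v₁ ∈ V₁, ∀ v₂ ∈ V₂, QuadraticMap.polar (⇑Q) v₁ v₂ = 0)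
    (g h : (CliffordAlgebra Q)ˣ)
    (hg0 : (g : CliffordAlgebra Q) ∈ CliffordAlgebra.evenOdd Q 0)
    (hgV : (g : CliffordAlgebra Q)
      ∈ Algebra.adjoin R (⇑(CliffordAlgebra.ι Q) '' (V₁ : Set M)))
    (hh0 : (h : CliffordAlgebra Q) ∈ CliffordAlgebra.evenOdd Q 0)
    (hhV : (h : CliffordAlgebra Q)
      ∈ Algebra.adjoin R (⇑(CliffordAlgebra.ι Q) '' (V₂ : Set M)))
    (hgconj : ∀ v₁ ∈ V₁,
      (g : CliffordAlgebra Q) * CliffordAlgebra.ι Q v₁ * ((g⁻¹ : (CliffordAlgebra Q)ˣ) : CliffordAlgebra Q)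
        ∈ ⇑(CliffordAlgebra.ι Q) '' (V₁ : Set M))
    (hhconj : ∀ v₂ ∈ V₂,
      (h : CliffordAlgebra Q) * CliffordAlgebra.ι Q v₂ * ((h⁻¹ : (CliffordAlgebra Q)ˣ) : CliffordAlgebra Q)
        ∈ ⇑(CliffordAlgebra.ι Q) '' (V₂ : Set M)) :
    ∀ v₁ ∈ V₁, ∀ v₂ ∈ V₂,
      ((g * h : (CliffordAlgebra Q)ˣ) : CliffordAlgebra Q) * CliffordAlgebra.ι Q (v₁ + v₂) *
          (((g * h)⁻¹ : (CliffordAlgebra Q)ˣ) : CliffordAlgebra Q)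
        = (g : CliffordAlgebra Q) * CliffordAlgebra.ι Q v₁ *
            ((g⁻¹ : (CliffordAlgebra Q)ˣ) : CliffordAlgebra Q)
          + (h : CliffordAlgebra Q) * CliffordAlgebra.ι Q v₂ *
              ((h⁻¹ : (CliffordAlgebra Q)ˣ) : CliffordAlgebra Q) ∧
      ((g * h : (CliffordAlgebra Q)ˣ) : CliffordAlgebra Q) * CliffordAlgebra.ι Q (v₁ + v₂) *
          (((g * h)⁻¹ : (CliffordAlgebra Q)ˣ) : CliffordAlgebra Q)
        ∈ ⇑(CliffordAlgebra.ι Q) '' ((V₁ ⊔ V₂ : Submodule R M) : Set M) := by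
  intro v₁ hv₁ v₂ hv₂
  obtain ⟨u, hu, hgu⟩ := hgconj v₁ hv₁
  obtain ⟨w, hw, hhw⟩ := hhconj v₂ hv₂
  have h_comm_v₁ : Commute (h : CliffordAlgebra Q) (ι Q v₁) :=
    commute_of_mem_even_of_mem_adjoin (fun v hv => horth v₁ hv₁ v hv) hh0 hhV
  have g_comm_w : Commute (g : CliffordAlgebra Q) (ι Q w) :=
    commute_of_mem_even_of_mem_adjoin
      (fun v hv => (QuadraticMap.polar_comm _ _ _).trans (horth v hv w hw)) hg0 hgV
  have hsplit := Units.mul_conj_add_eq g h h_comm_v₁ (hhw ▸ g_comm_w)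
  rw [map_add, hsplit, ← hgu, ← hhw, ← map_add]
  exact ⟨rfl, u + w, Submodule.mem_sup.2 ⟨u, hu, w, hw, rfl⟩, rfl⟩
end

section
/- Let Γ be a group, N a subgroup of Γ, and c ∈ Γ with c² = 1, c ∉ N, and Γ = N ∪ Nc. Let H be a group with an automorphism θ satisfying θ∘θ = id, and let ρ' : N → H be a group homomorphism. Assume: (H1) every element of H that commutes with ρ'(γ) for all γ ∈ N lies in the center Z(H) of H; and (H2) for every z ∈ Z(H) with θ(z) = z there exists w ∈ Z(H) with z = w·θ(w). Suppose there exists h ∈ H with ρ'(c·γ·c) = h·θ(ρ'(γ))·h⁻¹ for all γ ∈ N. Then there exists g ∈ H with g·θ(g) = 1 and ρ'(c·γ·c) = g·θ(ρ'(γ))·g⁻¹ for all γ ∈ N. -/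
/-!
Write `τ(x) = h θ(x) h⁻¹`. Since `c` normalizes `N` and `c² = 1`, applying the hypothesis twice
shows that `τ ∘ τ`, which is conjugation by `z = h θ(h)`, fixes the image of `ρ'`; by (H1) `z` is
central. Then `θ(h)` commutes with `h θ(h)`, hence with `h`, so `θ(z) = z`, and (H2) gives a central
`w` with `z = w θ(w)`. The element `g = w⁻¹ h` induces the same conjugation as `h` and satisfies
`g θ(g) = (w θ(w))⁻¹ z = 1`.
-/

theorem Subgroup.mul_mul_mem_of_not_mem_of_cover {Γ : Type*} [Group Γ] {N : Subgroup Γ} {c : Γ}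
    (hcN : c ∉ N) (hcover : ∀ γ : Γ, γ ∈ N ∨ ∃ ν ∈ N, γ = ν * c)
    {γ : Γ} (hγ : γ ∈ N) : c * γ * c ∈ N := by
  refine (hcover (c * γ * c)).resolve_right ?_
  rintro ⟨ν, hν, he⟩
  have hcγ : c * γ = ν := by simpa using he
  exact hcN (by simpa [← hcγ] using N.mul_mem hν (N.inv_mem hγ))

section Involution

variable {H : Type*} [Group H] {θ : MulAut H}

theorem commute_mul_apply_of_conj_apply_conj_apply (hθ : Function.Involutive θ) {h x : H}
    (hx : h * θ (h * θ x * h⁻¹) * h⁻¹ = x) : Commute (h * θ h) x := by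
  rw [map_mul, map_mul, map_inv, hθ] at hx
  rw [Commute, SemiconjBy]
  conv_rhs => rw [← hx]
  group

theorem apply_mul_self_eq_of_mem_center (hθ : Function.Involutive θ) {h : H}
    (hz : h * θ h ∈ Subgroup.center H) : θ (h * θ h) = h * θ h := by
  have hcomm : θ h * (h * θ h) = h * θ h * θ h := Subgroup.mem_center_iff.mp hz (θ h)
  have hθhh : θ h * h = h * θ h := mul_right_cancel (by rw [mul_assoc]; exact hcomm)
  rw [map_mul, hθ, hθhh]

theorem inv_mul_mul_apply_inv_mul_eq_one {h w : H} (hw : w ∈ Subgroup.center H)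
    (hz : h * θ h = w * θ w) : w⁻¹ * h * θ (w⁻¹ * h) = 1 := by
  have hθw : θ w ∈ Subgroup.center H := MulEquivClass.apply_mem_center θ hw
  have hθwh : (θ w)⁻¹ * h = h * (θ w)⁻¹ := (Subgroup.mem_center_iff.mp (inv_mem hθw) h).symm
  have hwθw : w⁻¹ * (θ w)⁻¹ = (θ w)⁻¹ * w⁻¹ := Subgroup.mem_center_iff.mp (inv_mem hθw) _
  calc w⁻¹ * h * θ (w⁻¹ * h) = w⁻¹ * (h * (θ w)⁻¹) * θ h := by simp only [map_mul, map_inv, mul_assoc]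
    _ = (θ w)⁻¹ * w⁻¹ * (h * θ h) := by rw [← hθwh, ← hwθw]; group
    _ = 1 := by rw [hz]; group

end Involution

theorem inv_mul_conj_of_mem_center {H : Type*} [Group H] {w : H} (hw : w ∈ Subgroup.center H)
    (h x : H) : w⁻¹ * h * x * (w⁻¹ * h)⁻¹ = h * x * h⁻¹ := by
  have hcomm := Subgroup.mem_center_iff.mp hw (h * x * h⁻¹)
  calc w⁻¹ * h * x * (w⁻¹ * h)⁻¹ = w⁻¹ * (h * x * h⁻¹ * w) := by group
    _ = h * x * h⁻¹ := by rw [hcomm]; group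

/-- Under hypotheses (H1) (the centralizer of the image of `ρ'` is the center of `H`) and
(H2) (every θ-fixed central element is of the form `w·θ(w)` with `w` central), if the
`c`-conjugate of `ρ'` is `H`-conjugate to `θ∘ρ'`, then the conjugating element can be chosen
to be a `g` with `g·θ(g) = 1`. -/
theorem stmt15 {Γ H : Type*} [Group Γ] [Group H]
    (N : Subgroup Γ) (c : Γ) (hc2 : c * c = 1) (hcN : c ∉ N)
    (hcover : ∀ γ : Γ, γ ∈ N ∨ ∃ ν ∈ N, γ = ν * c)
    (θ : MulAut H) (hθ : ∀ h, θ (θ h) = h)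
    (ρ' : N →* H)
    (H1 : ∀ x : H,
      (∀ γ (hγ : γ ∈ N), x * ρ' ⟨γ, hγ⟩ = ρ' ⟨γ, hγ⟩ * x) → x ∈ Subgroup.center H)
    (H2 : ∀ z ∈ Subgroup.center H, θ z = z → ∃ w ∈ Subgroup.center H, z = w * θ w)
    (h : H)
    (hh : ∀ γ (hγ : γ ∈ N) (hγ' : c * γ * c ∈ N),
      ρ' ⟨c * γ * c, hγ'⟩ = h * θ (ρ' ⟨γ, hγ⟩) * h⁻¹) :
    ∃ g : H, g * θ g = 1 ∧
      ∀ γ (hγ : γ ∈ N) (hγ' : c * γ * c ∈ N),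
        ρ' ⟨c * γ * c, hγ'⟩ = g * θ (ρ' ⟨γ, hγ⟩) * g⁻¹ := by
  have hmem {γ : Γ} (hγ : γ ∈ N) : c * γ * c ∈ N :=
    Subgroup.mul_mul_mem_of_not_mem_of_cover hcN hcover hγ
  have hzc : h * θ h ∈ Subgroup.center H := by
    refine H1 _ fun γ hγ => commute_mul_apply_of_conj_apply_conj_apply hθ ?_
    have hback : c * (c * γ * c) * c = γ := by
      simp only [mul_assoc, hc2, mul_one]; rw [← mul_assoc, hc2, one_mul]
    rw [← hh γ hγ (hmem hγ), ← hh _ (hmem hγ) (hmem (hmem hγ))]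
    simp only [hback]
  obtain ⟨w, hw, hzw⟩ := H2 _ hzc (apply_mul_self_eq_of_mem_center hθ hzc)
  refine ⟨w⁻¹ * h, inv_mul_mul_apply_inv_mul_eq_one hw hzw, fun γ hγ hγ' => ?_⟩
  rw [hh γ hγ hγ', inv_mul_conj_of_mem_center hw]
end

section
/- Let Γ be a group, N a subgroup of Γ, and c ∈ Γ with c² = 1, c ∉ N, and Γ = N ∪ Nc. Let H be a group with an automorphism θ satisfying θ∘θ = id, form H ⋊ ℤ/2 with the nontrivial element acting by θ, and let ρ' : N → H be a homomorphism satisfying (H1): every element of H commuting with ρ'(γ) for all γ ∈ N lies in the center Z(H). Let ρ₀, ρ₁ : Γ → H ⋊ ℤ/2 be two homomorphisms with ρₑ(γ) = (ρ'(γ), 0) for all γ ∈ N and ρₑ(c) ∈ H × {1} (e = 0, 1), and write ρ₀(c) = (g₀, 1), ρ₁(c) = (g₁, 1). Then: z := g₀·g₁⁻¹ lies in Z(H) and satisfies z·θ(z) = 1; and there exists h ∈ H with ρ₁(γ) = (h, 0)·ρ₀(γ)·(h, 0)⁻¹ for all γ ∈ Γ if and only if there exists x ∈ Z(H) with z = θ(x)·x⁻¹.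 -/
/-- The action of `ℤ/2` on `H` through an involutive automorphism `θ`, as a homomorphism
`Multiplicative (ZMod 2) →* MulAut H` (used to form the semidirect product `H ⋊ ℤ/2`). -/
def thetaAction {H : Type*} [Group H] (θ : MulAut H) (hθ : ∀ h, θ (θ h) = h) :
    Multiplicative (ZMod 2) →* MulAut H :=
  MonoidHom.mk' (fun x => θ ^ (Multiplicative.toAdd x).val) (by
    have h2 : θ * θ = 1 := by
      ext h
      simpa using hθ h
    have key : ∀ m : ℕ, θ ^ (m % 2) = θ ^ m := by
      intro m
      conv_rhs => rw [← Nat.div_add_mod m 2]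
      rw [pow_add, pow_mul, sq, h2, one_pow, one_mul]
    intro a b
    simp only [toAdd_mul, ZMod.val_add, key, pow_add])

/-!
Composing `ρ₀` with the projection to `ℤ/2` gives a homomorphism whose kernel is exactly `N`,
so `N` is normal and `c * c ∈ N`. As `ρ₀` and `ρ₁` agree on `N`, conjugating by `c` shows that
`ρ₀ c * (ρ₁ c)⁻¹ = (z, 0)` commutes with `ρ'(N)`, so `z` is central by (H1), and
`(ρ₀ c)² = (ρ₁ c)²` unwinds to `z * θ z = 1`. A conjugator `(h, 0)` fixes `ρ'(N)`, hence is
central, and at `c` it turns `g₀` into `h * g₀ * (θ h)⁻¹`, i.e. `z = θ h * h⁻¹`; conversely such a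
central `x` conjugates `ρ₀` into `ρ₁` on `N` and at `c`, which generate `Γ`.
-/

open SemidirectProduct

namespace SemidirectProduct

variable {N G : Type*} [Group N] [Group G] {φ : G →* MulAut N}

theorem inl_mul_mul_inl_inv (n : N) (x : N ⋊[φ] G) :
    inl n * x * (inl n)⁻¹ = ⟨n * x.left * φ x.right n⁻¹, x.right⟩ := by
  ext <;> simp

theorem mul_inl_mul_inv (x : N ⋊[φ] G) (n : N) :
    x * inl n * x⁻¹ = inl (x.left * φ x.right n * x.left⁻¹) := by
  ext <;> simp

theorem inl_eq_inl_mul_inl_mul_inl_inv_iff {n m : N} :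
    (inl m : N ⋊[φ] G) = inl n * inl m * (inl n)⁻¹ ↔ n * m = m * n := by
  rw [← map_inv, ← map_mul, ← map_mul, inl_inj, eq_comm, mul_inv_eq_iff_eq_mul]

theorem mul_inv_eq_inl_of_right_eq {x y : N ⋊[φ] G} (h : x.right = y.right) :
    x * y⁻¹ = inl (x.left * y.left⁻¹) := by
  ext <;> simp [h]

end SemidirectProduct

theorem thetaAction_ofAdd_one {H : Type*} [Group H] (θ : MulAut H) (hθ : ∀ h, θ (θ h) = h) :
    thetaAction θ hθ (Multiplicative.ofAdd 1) = θ := by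
  show θ ^ (1 : ZMod 2).val = θ
  simp [ZMod.val_one]

section Cover

variable {Γ G : Type*} [Group Γ] [Group G] {N : Subgroup Γ} {c : Γ}

theorem Subgroup.eq_ker_of_forall_mem_or_eq_mul (hcover : ∀ γ : Γ, γ ∈ N ∨ ∃ ν ∈ N, γ = ν * c)
    {f : Γ →* G} (hN : ∀ γ ∈ N, f γ = 1) (hc : f c ≠ 1) : N = f.ker := by
  ext γ
  refine ⟨hN γ, fun hγ => ?_⟩
  rcases hcover γ with hγN | ⟨ν, hν, rfl⟩
  · exact hγN
  · exact absurd (by simpa [hN ν hν] using hγ) hc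

theorem MonoidHom.eq_of_forall_mem_or_eq_mul (hcover : ∀ γ : Γ, γ ∈ N ∨ ∃ ν ∈ N, γ = ν * c)
    {f₀ f₁ : Γ →* G} (hN : ∀ γ ∈ N, f₀ γ = f₁ γ) (hc : f₀ c = f₁ c) : f₀ = f₁ := by
  ext γ
  rcases hcover γ with hγ | ⟨ν, hν, rfl⟩
  · exact hN γ hγ
  · rw [map_mul, map_mul, hN ν hν, hc]

end Cover

theorem MonoidHom.commute_mul_inv_of_eqOn_normal {Γ G : Type*} [Group Γ] [Group G]
    {N : Subgroup Γ} [N.Normal] {f₀ f₁ : Γ →* G} (h : ∀ γ ∈ N, f₀ γ = f₁ γ) (c : Γ)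
    {μ : Γ} (hμ : μ ∈ N) : Commute (f₀ c * (f₁ c)⁻¹) (f₀ μ) := by
  have hconj := h _ (‹N.Normal›.conj_mem μ hμ c⁻¹)
  rw [inv_inv, map_mul, map_mul, map_mul, map_mul, map_inv, map_inv, ← h μ hμ] at hconj
  show _ = _
  calc f₀ c * (f₁ c)⁻¹ * f₀ μ = f₀ c * ((f₁ c)⁻¹ * f₀ μ * f₁ c) * (f₁ c)⁻¹ := by group
    _ = f₀ μ * (f₀ c * (f₁ c)⁻¹) := by rw [← hconj]; group

section Involution

variable {H : Type*} [Group H] {θ : MulAut H} {hθ : ∀ h, θ (θ h) = h}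

theorem inl_mul_mk_mul_inl_inv_eq_iff {h g₀ g₁ : H} (hh : h ∈ Subgroup.center H) :
    (⟨g₁, Multiplicative.ofAdd 1⟩ : H ⋊[thetaAction θ hθ] Multiplicative (ZMod 2)) =
        inl h * ⟨g₀, Multiplicative.ofAdd 1⟩ * (inl h)⁻¹ ↔
      g₀ * g₁⁻¹ = θ h * h⁻¹ := by
  have hθh : θ h ∈ Subgroup.center H := MulEquivClass.apply_mem_center θ hh
  have hswap : h * g₀ * (θ h)⁻¹ = (θ h * h⁻¹)⁻¹ * g₀ := by
    rw [mul_assoc, ← (hθh.comm g₀).inv_left.eq]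
    group
  rw [inl_mul_mul_inl_inv, thetaAction_ofAdd_one, SemidirectProduct.ext_iff]
  simp only [and_true, map_inv]
  rw [hswap, eq_inv_mul_iff_mul_eq, mul_inv_eq_iff_eq_mul, eq_comm]

theorem mul_thetaAction_eq_one_of_mul_self_eq {a b : H ⋊[thetaAction θ hθ] Multiplicative (ZMod 2)}
    (hb : b.right = Multiplicative.ofAdd 1) (hab : a * a = b * b) {z : H}
    (hz : a * b⁻¹ = inl z) (hzc : z ∈ Subgroup.center H) : z * θ z = 1 := by
  have hθz : θ z ∈ Subgroup.center H := MulEquivClass.apply_mem_center θ hzc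
  apply inl_injective (φ := thetaAction θ hθ)
  calc inl (z * θ z) = inl z * (b * inl z * b⁻¹) := by
        rw [mul_inl_mul_inv, hb, thetaAction_ofAdd_one, ← (hθz.comm b.left).eq,
          mul_inv_cancel_right, map_mul]
    _ = a * a * (b * b)⁻¹ := by rw [← hz]; group
    _ = inl 1 := by rw [hab, mul_inv_cancel, map_one]

end Involution

theorem stmt16_general {Γ H : Type*} [Group Γ] [Group H]
    (N : Subgroup Γ) (c : Γ)
    (hcover : ∀ γ : Γ, γ ∈ N ∨ ∃ ν ∈ N, γ = ν * c)
    (θ : MulAut H) (hθ : ∀ h, θ (θ h) = h)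
    (ρ' : N →* H)
    (H1 : ∀ x : H,
      (∀ γ (hγ : γ ∈ N), x * ρ' ⟨γ, hγ⟩ = ρ' ⟨γ, hγ⟩ * x) → x ∈ Subgroup.center H)
    (ρ₀ ρ₁ : Γ →* H ⋊[thetaAction θ hθ] Multiplicative (ZMod 2))
    (hρ₀ : ∀ γ (hγ : γ ∈ N), ρ₀ γ = ⟨ρ' ⟨γ, hγ⟩, 1⟩)
    (hρ₁ : ∀ γ (hγ : γ ∈ N), ρ₁ γ = ⟨ρ' ⟨γ, hγ⟩, 1⟩)
    (g₀ g₁ : H)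
    (hg₀ : ρ₀ c = ⟨g₀, Multiplicative.ofAdd (1 : ZMod 2)⟩)
    (hg₁ : ρ₁ c = ⟨g₁, Multiplicative.ofAdd (1 : ZMod 2)⟩) :
    (g₀ * g₁⁻¹ ∈ Subgroup.center H ∧ (g₀ * g₁⁻¹) * θ (g₀ * g₁⁻¹) = 1) ∧
    ((∃ h : H, ∀ γ : Γ,
        ρ₁ γ = SemidirectProduct.inl h * ρ₀ γ * (SemidirectProduct.inl h)⁻¹) ↔
      ∃ x ∈ Subgroup.center H, g₀ * g₁⁻¹ = θ x * x⁻¹) := by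
  have hρ₀N : ∀ γ (hγ : γ ∈ N), ρ₀ γ = inl (ρ' ⟨γ, hγ⟩) := hρ₀
  have hagree : ∀ γ ∈ N, ρ₀ γ = ρ₁ γ := fun γ hγ => (hρ₀ γ hγ).trans (hρ₁ γ hγ).symm
  have hker : N = (rightHom.comp ρ₀).ker :=
    N.eq_ker_of_forall_mem_or_eq_mul hcover (fun γ hγ => by simp [hρ₀ γ hγ]) (by simp [hg₀])
  have : N.Normal := hker ▸ MonoidHom.normal_ker _
  have hz : ρ₀ c * (ρ₁ c)⁻¹ = inl (g₀ * g₁⁻¹) := by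
    rw [hg₀, hg₁]
    exact mul_inv_eq_inl_of_right_eq rfl
  have hzc : g₀ * g₁⁻¹ ∈ Subgroup.center H := H1 _ fun μ hμ => inl_injective <| by
    simpa only [hz, hρ₀N μ hμ, map_mul] using
      (MonoidHom.commute_mul_inv_of_eqOn_normal hagree c hμ).eq
  have hcc : c * c ∈ N := by rw [hker]; simp [hg₀]; decide
  refine ⟨⟨hzc, mul_thetaAction_eq_one_of_mul_self_eq (by rw [hg₁]) ?_ hz hzc⟩, ?_⟩
  · rw [← map_mul, ← map_mul, hagree _ hcc]
  constructor
  · rintro ⟨h, hh⟩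
    have hhc : h ∈ Subgroup.center H := H1 _ fun μ hμ =>
      inl_eq_inl_mul_inl_mul_inl_inv_iff.mp (by simpa only [← hagree μ hμ, hρ₀N μ hμ] using hh μ)
    exact ⟨h, hhc, (inl_mul_mk_mul_inl_inv_eq_iff (hθ := hθ) hhc).mp (hg₀ ▸ hg₁ ▸ hh c)⟩
  · rintro ⟨x, hx, hzx⟩
    refine ⟨x, DFunLike.congr_fun (MonoidHom.eq_of_forall_mem_or_eq_mul hcover
      (f₁ := (MulAut.conj (inl x)).toMonoidHom.comp ρ₀) (fun μ hμ => ?_) ?_)⟩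
    · show ρ₁ μ = inl x * ρ₀ μ * (inl x)⁻¹
      rw [← hagree μ hμ, hρ₀N μ hμ]
      exact inl_eq_inl_mul_inl_mul_inl_inv_iff.mpr (hx.comm _).eq
    · show ρ₁ c = inl x * ρ₀ c * (inl x)⁻¹
      rw [hg₀, hg₁]
      exact (inl_mul_mk_mul_inl_inv_eq_iff hx).mpr hzx

/-- For two extensions `ρ₀, ρ₁ : Γ → H ⋊ ℤ/2` of `ρ' : N → H` with `ρ₀(c) = (g₀, 1)` and
`ρ₁(c) = (g₁, 1)`, under hypothesis (H1) the element `z := g₀·g₁⁻¹` is central and satisfies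
`z·θ(z) = 1`; and `ρ₁` is conjugate to `ρ₀` by an element `(h, 0)` of `H` iff `z = θ(x)·x⁻¹`
for some central `x` (so the extensions form a torsor under `H¹(ℤ/2, Z(H))`). -/
theorem stmt16 {Γ H : Type*} [Group Γ] [Group H]
    (N : Subgroup Γ) (c : Γ) (hc2 : c * c = 1) (hcN : c ∉ N)
    (hcover : ∀ γ : Γ, γ ∈ N ∨ ∃ ν ∈ N, γ = ν * c)
    (θ : MulAut H) (hθ : ∀ h, θ (θ h) = h)
    (ρ' : N →* H)
    (H1 : ∀ x : H,
      (∀ γ (hγ : γ ∈ N), x * ρ' ⟨γ, hγ⟩ = ρ' ⟨γ, hγ⟩ * x) → x ∈ Subgroup.center H)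
    (ρ₀ ρ₁ : Γ →* H ⋊[thetaAction θ hθ] Multiplicative (ZMod 2))
    (hρ₀ : ∀ γ (hγ : γ ∈ N), ρ₀ γ = ⟨ρ' ⟨γ, hγ⟩, 1⟩)
    (hρ₁ : ∀ γ (hγ : γ ∈ N), ρ₁ γ = ⟨ρ' ⟨γ, hγ⟩, 1⟩)
    (g₀ g₁ : H)
    (hg₀ : ρ₀ c = ⟨g₀, Multiplicative.ofAdd (1 : ZMod 2)⟩)
    (hg₁ : ρ₁ c = ⟨g₁, Multiplicative.ofAdd (1 : ZMod 2)⟩) :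
    (g₀ * g₁⁻¹ ∈ Subgroup.center H ∧ (g₀ * g₁⁻¹) * θ (g₀ * g₁⁻¹) = 1) ∧
    ((∃ h : H, ∀ γ : Γ,
        ρ₁ γ = SemidirectProduct.inl h * ρ₀ γ * (SemidirectProduct.inl h)⁻¹) ↔
      ∃ x ∈ Subgroup.center H, g₀ * g₁⁻¹ = θ x * x⁻¹) :=
  stmt16_general N c hcover θ hθ ρ' H1 ρ₀ ρ₁ hρ₀ hρ₁ g₀ g₁ hg₀ hg₁
end
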